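/- arXiv:1506.05667 — 3 statements merged into one kernel-verified Lean document; each statement's English description precedes it below -/
import Mathlib

section
/- For any family 𝒢 of connected non-trivial graphs on a common vertex set V and any family ℋ of non-trivial graphs on a common vertex set V', Sd(𝒢⊙ℋ) = |V| · Sd_A(ℋ). -/
open SimpleGraph

/-- `S` is a metric generator for `G`: every pair of distinct vertices is
distinguished by some element of `S` via the shortest-path distance. -/
def IsMetricGen {V : Type*} (G : SimpleGraph V) (S : Set V) : Prop :=
  ∀ u v : V, u ≠ v → ∃ s ∈ S, G.dist s u ≠ G.dist s v

/-- `S` is an adjacency generator for `G`. -/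
def IsAdjGen {V : Type*} (G : SimpleGraph V) (S : Set V) : Prop :=
  ∀ x y : V, x ∉ S → y ∉ S → x ≠ y → ∃ s ∈ S, Xor' (G.Adj s x) (G.Adj s y)

/-- `S` is a simultaneous metric generator for the family `𝒢`. -/
def IsSimMetricGen {V : Type*} (𝒢 : Set (SimpleGraph V)) (S : Set V) : Prop :=
  ∀ G ∈ 𝒢, IsMetricGen G S

/-- `S` is a simultaneous adjacency generator for the family `ℋ`. -/
def IsSimAdjGen {V : Type*} (ℋ : Set (SimpleGraph V)) (S : Set V) : Prop :=
  ∀ H ∈ ℋ, IsAdjGen H S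

/-- The simultaneous metric dimension of a family of graphs. -/
noncomputable def Sd {V : Type*} (𝒢 : Set (SimpleGraph V)) : ℕ :=
  sInf {n | ∃ S : Set V, S.ncard = n ∧ IsSimMetricGen 𝒢 S}

/-- The simultaneous adjacency dimension of a family of graphs. -/
noncomputable def SdA {V : Type*} (ℋ : Set (SimpleGraph V)) : ℕ :=
  sInf {n | ∃ S : Set V, S.ncard = n ∧ IsSimAdjGen ℋ S}

/-- The adjacency dimension of a graph. -/
noncomputable def adjDim {V : Type*} (G : SimpleGraph V) : ℕ := SdA {G}

/-- `B` is an adjacency basis of `G`. -/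
def IsAdjBasis {V : Type*} (G : SimpleGraph V) (B : Set V) : Prop :=
  IsAdjGen G B ∧ B.ncard = adjDim G

/-- `B` is a simultaneous adjacency basis of the family `ℋ`. -/
def IsSimAdjBasis {V : Type*} (ℋ : Set (SimpleGraph V)) (B : Set V) : Prop :=
  IsSimAdjGen ℋ B ∧ B.ncard = SdA ℋ

/-- `D` is a dominating set of `G`. -/
def IsDomSet {V : Type*} (G : SimpleGraph V) (D : Set V) : Prop :=
  ∀ v ∉ D, ∃ u ∈ D, G.Adj u v

/-- `D` is a simultaneous dominating set of the family `𝒢`. -/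
def IsSimDomSet {V : Type*} (𝒢 : Set (SimpleGraph V)) (D : Set V) : Prop :=
  ∀ G ∈ 𝒢, IsDomSet G D

/-- The simultaneous domination number of a family of graphs. -/
noncomputable def Sgamma {V : Type*} (𝒢 : Set (SimpleGraph V)) : ℕ :=
  sInf {n | ∃ D : Set V, D.ncard = n ∧ IsSimDomSet 𝒢 D}

/-- The domination number of a graph. -/
noncomputable def domNum {V : Type*} (G : SimpleGraph V) : ℕ := Sgamma {G}

/-- `γ'(G) = min over vertices `v` of `γ(G - v)`. -/
noncomputable def gammaPrime {V : Type*} (G : SimpleGraph V) : ℕ :=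
  sInf {n | ∃ v : V, n = domNum (G.induce {v}ᶜ)}

/-- The corona product `G ⊙ H`: one copy of `G` together with a copy of `H`
for each vertex `i` of `G`, joining `i` to every vertex of its copy. -/
def corona {V V' : Type*} (G : SimpleGraph V) (H : SimpleGraph V') :
    SimpleGraph (V ⊕ V × V') where
  Adj x y :=
    match x, y with
    | Sum.inl i, Sum.inl j => G.Adj i j
    | Sum.inl i, Sum.inr p => i = p.1
    | Sum.inr p, Sum.inl j => p.1 = j
    | Sum.inr p, Sum.inr q => p.1 = q.1 ∧ H.Adj p.2 q.2
  symm := by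
    constructor
    rintro (i | p) (j | q) h
    · exact G.adj_symm h
    · exact h.symm
    · exact h.symm
    · exact ⟨h.1.symm, H.adj_symm h.2⟩
  loopless := by
    constructor
    rintro (i | p) h
    · exact G.irrefl h
    · exact H.irrefl h.2

/-- The family `{G ⊙ H : G ∈ 𝒢, H ∈ ℋ}` of corona products. -/
def coronaFam {V V' : Type*} (𝒢 : Set (SimpleGraph V)) (ℋ : Set (SimpleGraph V')) :
    Set (SimpleGraph (V ⊕ V × V')) :=
  {K | ∃ G ∈ 𝒢, ∃ H ∈ ℋ, K = corona G H}

/-- The join `G + H` of two (vertex-disjoint) graphs. -/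
def joinG {V₁ V₂ : Type*} (G : SimpleGraph V₁) (H : SimpleGraph V₂) :
    SimpleGraph (V₁ ⊕ V₂) where
  Adj x y :=
    match x, y with
    | Sum.inl a, Sum.inl b => G.Adj a b
    | Sum.inl _, Sum.inr _ => True
    | Sum.inr _, Sum.inl _ => True
    | Sum.inr a, Sum.inr b => H.Adj a b
  symm := by
    constructor
    rintro (a | a) (b | b) h
    · exact G.adj_symm h
    · trivial
    · trivial
    · exact H.adj_symm h
  loopless := by
    constructor
    rintro (a | a) h
    · exact G.irrefl h
    · exact H.irrefl h

/-- The family `{G + H : G ∈ 𝒢, H ∈ ℋ}` of joins. -/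
def joinFam {V₁ V₂ : Type*} (𝒢 : Set (SimpleGraph V₁)) (ℋ : Set (SimpleGraph V₂)) :
    Set (SimpleGraph (V₁ ⊕ V₂)) :=
  {K | ∃ G ∈ 𝒢, ∃ H ∈ ℋ, K = joinG G H}

/-- The family `𝒢_B(G)`: all graphs `G'` such that, for some permutation `f` of the
vertex set fixing `B` pointwise, `N_{G'}(x) = f(N_G(x))` for every `x ∈ B`. -/
def GBfam {V : Type*} (G : SimpleGraph V) (B : Set V) : Set (SimpleGraph V) :=
  {G' | ∃ f : Equiv.Perm V, (∀ x ∈ B, f x = x) ∧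
    ∀ x ∈ B, G'.neighborSet x = f '' (G.neighborSet x)}

/-!
In `G ⊙ H` the vertex `i` of `G` separates the copy `H_i` from the rest of the graph, so every
vertex outside `H_i` sees all of `H_i` at the same distance, while inside `H_i` distances are
`1` or `2` according to adjacency in `H`. Hence a metric generator of `G ⊙ H` must contain, in
every copy `H_i`, an adjacency generator of `H`; conversely, putting a simultaneous adjacency
basis of `ℋ` into every copy resolves all pairs of vertices of every `G ⊙ H`, since `G` is
connected and has a second vertex.
-/

namespace SimpleGraph

variable {α : Type*} {K : SimpleGraph α} {u w : α}

theorem Walk.apply_le_apply_add_length (f : α → ℕ) (hf : ∀ v v', K.Adj v v' → f v' ≤ f v + 1)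
    (p : K.Walk u w) : f w ≤ f u + p.length := by
  induction p with
  | nil => simp
  | cons h _ ih =>
    have := hf _ _ h
    rw [Walk.length_cons]
    omega

theorem Reachable.apply_le_apply_add_dist (f : α → ℕ)
    (hf : ∀ v v', K.Adj v v' → f v' ≤ f v + 1) (h : K.Reachable u w) :
    f w ≤ f u + K.dist u w := by
  obtain ⟨p, hp⟩ := h.exists_walk_length_eq_dist
  exact hp ▸ p.apply_le_apply_add_length f hf

end SimpleGraph

section Generators

variable {W : Type*}

theorem IsAdjGen.nonempty [Nontrivial W] {K : SimpleGraph W} {B : Set W} (h : IsAdjGen K B) :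
    B.Nonempty := by
  rw [Set.nonempty_iff_ne_empty]
  rintro rfl
  obtain ⟨x, y, hxy⟩ := exists_pair_ne W
  obtain ⟨s, hs, -⟩ := h x y (Set.notMem_empty x) (Set.notMem_empty y) hxy
  exact Set.notMem_empty s hs

theorem exists_isSimAdjBasis (ℋ : Set (SimpleGraph W)) : ∃ B, IsSimAdjBasis ℋ B := by
  obtain ⟨B, hcard, hB⟩ := Nat.sInf_mem (s := {n | ∃ S : Set W, S.ncard = n ∧ IsSimAdjGen ℋ S})
    ⟨_, Set.univ, rfl, fun _ _ x _ hx => absurd (Set.mem_univ x) hx⟩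
  exact ⟨B, hB, hcard⟩

end Generators

section Corona

variable {V V' : Type*} {G : SimpleGraph V} {H : SimpleGraph V'}

@[simp]
theorem corona_adj_inl_inl {i j : V} :
    (corona G H).Adj (.inl i) (.inl j) ↔ G.Adj i j := Iff.rfl

@[simp]
theorem corona_adj_inl_inr {i j : V} {y : V'} :
    (corona G H).Adj (.inl i) (.inr (j, y)) ↔ i = j := Iff.rfl

@[simp]
theorem corona_adj_inr_inl {i j : V} {x : V'} :
    (corona G H).Adj (.inr (i, x)) (.inl j) ↔ i = j := Iff.rfl

@[simp]
theorem corona_adj_inr_inr {i j : V} {x y : V'} :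
    (corona G H).Adj (.inr (i, x)) (.inr (j, y)) ↔ i = j ∧ H.Adj x y := Iff.rfl

def coronaInlHom (G : SimpleGraph V) (H : SimpleGraph V') : G →g corona G H where
  toFun := Sum.inl
  map_rel' h := h

@[simp]
theorem coronaInlHom_apply (i : V) : coronaInlHom G H i = .inl i := rfl

theorem corona_connected (hG : G.Connected) : (corona G H).Connected := by
  have hbase : ∀ w, (corona G H).Reachable (.inl (w.elim id Prod.fst)) w := by
    rintro (i | ⟨i, x⟩)
    · rfl
    · exact Adj.reachable (corona_adj_inl_inr.2 rfl)
  have : Nonempty V := hG.nonempty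
  exact ⟨fun v w => ((hbase v).symm.trans ((hG _ _).map (coronaInlHom G H))).trans (hbase w)⟩

theorem corona_dist_inl (hG : G.Connected) (i : V) (w : V ⊕ V × V') :
    (corona G H).dist (.inl i) w = w.elim (G.dist i) (fun p => G.dist i p.1 + 1) := by
  set f : V ⊕ V × V' → ℕ := Sum.elim (G.dist i) (fun p => G.dist i p.1 + 1)
  apply le_antisymm
  · rcases w with j | ⟨j, y⟩ <;> obtain ⟨p, hp⟩ := hG.exists_walk_length_eq_dist i j
    · have := dist_le (p.map (coronaInlHom G H))
      rwa [Walk.length_map, hp] at this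
    · have hadj : (corona G H).Adj (coronaInlHom G H j) (.inr (j, y)) :=
        corona_adj_inl_inr.2 rfl
      have := dist_le ((p.map (coronaInlHom G H)).concat hadj)
      rwa [Walk.length_concat, Walk.length_map, hp] at this
  · have hf : ∀ v v', (corona G H).Adj v v' → f v' ≤ f v + 1 := by
      rintro (k | ⟨k, x⟩) (l | ⟨l, y⟩) h <;> simp only [corona_adj_inl_inl, corona_adj_inl_inr,
        corona_adj_inr_inl, corona_adj_inr_inr] at h
      · have := h.diff_dist_adj (u := i)
        simp only [f, Sum.elim_inl]
        omega
      · subst h; simp [f]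
      · subst h; simp only [f, Sum.elim_inl, Sum.elim_inr]; omega
      · obtain ⟨rfl, -⟩ := h; simp [f]
    simpa [f] using (corona_connected hG (.inl i) w).apply_le_apply_add_dist f hf

theorem corona_dist_inr_inl (hG : G.Connected) (i j : V) (x : V') :
    (corona G H).dist (.inr (i, x)) (.inl j) = G.dist i j + 1 := by
  rw [dist_comm, corona_dist_inl hG, Sum.elim_inr, G.dist_comm]

def coronaWalkViaHub (i : V) (x y : V') : (corona G H).Walk (.inr (i, x)) (.inr (i, y)) :=
  .cons (corona_adj_inr_inl.2 rfl) (.cons (corona_adj_inl_inr.2 rfl) .nil)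

theorem corona_dist_inr_inr_le_two (i : V) (x y : V') :
    (corona G H).dist (.inr (i, x)) (.inr (i, y)) ≤ 2 :=
  dist_le (coronaWalkViaHub i x y)

theorem corona_dist_inr_inr_of_fst_ne (hG : G.Connected) {i j : V} (hij : i ≠ j) (x y : V') :
    (corona G H).dist (.inr (i, x)) (.inr (j, y)) = G.dist i j + 2 := by
  apply le_antisymm
  · have hx : (corona G H).dist (.inr (i, x)) (.inl i) = 1 :=
      dist_eq_one_iff_adj.2 (corona_adj_inr_inl.2 rfl)
    have := (corona_connected (H := H) hG).dist_triangle
      (u := .inr (i, x)) (v := .inl i) (w := .inr (j, y))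
    simp only [hx, corona_dist_inl hG, Sum.elim_inr] at this
    omega
  · classical
    -- `1 + dist (inl i) ·` outside the copy `H_i`, and `0` on it
    set f : V ⊕ V × V' → ℕ :=
      Sum.elim (fun k => G.dist i k + 1) (fun p => if p.1 = i then 0 else G.dist i p.1 + 2)
    have hf : ∀ v v', (corona G H).Adj v v' → f v' ≤ f v + 1 := by
      rintro (k | ⟨k, x⟩) (l | ⟨l, y⟩) h <;> simp only [corona_adj_inl_inl, corona_adj_inl_inr,
        corona_adj_inr_inl, corona_adj_inr_inr] at h
      · have := h.diff_dist_adj (u := i)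
        simp only [f, Sum.elim_inl]
        omega
      · subst h; simp only [f, Sum.elim_inl, Sum.elim_inr]; split_ifs <;> omega
      · subst h; simp only [f, Sum.elim_inl, Sum.elim_inr]; split_ifs with hk
        · simp [hk]
        · omega
      · obtain ⟨rfl, -⟩ := h; simp [f]
    simpa [f, hij.symm] using
      (corona_connected hG (.inr (i, x)) (.inr (j, y))).apply_le_apply_add_dist f hf

theorem corona_dist_inr_inr_of_not_adj (i : V) {x y : V'} (hxy : x ≠ y) (hadj : ¬H.Adj x y) :
    (corona G H).dist (.inr (i, x)) (.inr (i, y)) = 2 := by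
  refine le_antisymm (corona_dist_inr_inr_le_two i x y) ?_
  refine (coronaWalkViaHub i x y).reachable.one_lt_dist_of_ne_of_not_adj (by simpa using hxy) ?_
  simpa using hadj

theorem corona_dist_inr_eq_iff (i : V) {b x y : V'} (hbx : b ≠ x) (hby : b ≠ y) :
    (corona G H).dist (.inr (i, b)) (.inr (i, x)) = (corona G H).dist (.inr (i, b)) (.inr (i, y)) ↔
      (H.Adj b x ↔ H.Adj b y) := by
  have hone : ∀ z, (corona G H).dist (.inr (i, b)) (.inr (i, z)) = 1 ↔ H.Adj b z := by simp
  by_cases hx : H.Adj b x <;> by_cases hy : H.Adj b y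
  · simp [(hone x).2 hx, (hone y).2 hy, hx, hy]
  · simp [(hone x).2 hx, corona_dist_inr_inr_of_not_adj i hby hy, hx, hy]
  · simp [(hone y).2 hy, corona_dist_inr_inr_of_not_adj i hbx hx, hx, hy]
  · simp [corona_dist_inr_inr_of_not_adj i hbx hx, corona_dist_inr_inr_of_not_adj i hby hy, hx, hy]

theorem corona_exists_dist_inl_ne_dist_inr [Nontrivial V] (hG : G.Connected) (i j : V)
    (b y : V') :
    ∃ k, (corona G H).dist (.inr (k, b)) (.inl i) ≠
      (corona G H).dist (.inr (k, b)) (.inr (j, y)) := by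
  by_cases hij : i = j
  · subst hij
    obtain ⟨k, hki⟩ := exists_ne i
    refine ⟨k, ?_⟩
    rw [corona_dist_inr_inl hG, corona_dist_inr_inr_of_fst_ne hG hki]
    omega
  · refine ⟨i, ?_⟩
    rw [corona_dist_inr_inl hG, corona_dist_inr_inr_of_fst_ne hG hij, dist_self]
    have := hG.pos_dist_of_ne hij
    omega

theorem isMetricGen_corona [Nontrivial V] [Nontrivial V'] (hG : G.Connected) {B : Set V'}
    (hB : IsAdjGen H B) : IsMetricGen (corona G H) (Sum.inr '' (Set.univ ×ˢ B)) := by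
  obtain ⟨b, hb⟩ := hB.nonempty
  have hmem : ∀ i {c}, c ∈ B → (.inr (i, c) : V ⊕ V × V') ∈ Sum.inr '' (Set.univ ×ˢ B) :=
    fun i c hc => ⟨(i, c), ⟨Set.mem_univ i, hc⟩, rfl⟩
  rintro (i | ⟨i, x⟩) (j | ⟨j, y⟩) huv
  · have hij : i ≠ j := fun h => huv (h ▸ rfl)
    refine ⟨_, hmem i hb, ?_⟩
    rw [corona_dist_inr_inl hG, corona_dist_inr_inl hG, dist_self]
    have := hG.pos_dist_of_ne hij
    omega
  · obtain ⟨k, hk⟩ := corona_exists_dist_inl_ne_dist_inr hG i j b y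
    exact ⟨_, hmem k hb, hk⟩
  · obtain ⟨k, hk⟩ := corona_exists_dist_inl_ne_dist_inr hG j i b x
    exact ⟨_, hmem k hb, hk.symm⟩
  by_cases hij : i = j
  · subst hij
    have hxy : x ≠ y := fun h => huv (h ▸ rfl)
    have hpos : 0 < (corona G H).dist (.inr (i, x)) (.inr (i, y)) :=
      (coronaWalkViaHub i x y).reachable.pos_dist_of_ne (by simpa using hxy)
    by_cases hx : x ∈ B
    · exact ⟨_, hmem i hx, by rw [dist_self]; exact hpos.ne⟩
    by_cases hy : y ∈ B
    · exact ⟨_, hmem i hy, by rw [dist_self, dist_comm]; exact hpos.ne'⟩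
    obtain ⟨c, hc, hxor⟩ := hB x y hx hy hxy
    have hcx : c ≠ x := fun h => hx (h ▸ hc)
    have hcy : c ≠ y := fun h => hy (h ▸ hc)
    exact ⟨_, hmem i hc, fun h =>
      (xor_iff_not_iff _ _).1 hxor ((corona_dist_inr_eq_iff i hcx hcy).1 h)⟩
  · refine ⟨_, hmem i hb, ?_⟩
    have := corona_dist_inr_inr_le_two (G := G) (H := H) i b x
    have := hG.pos_dist_of_ne hij
    rw [corona_dist_inr_inr_of_fst_ne hG hij]
    omega

theorem IsMetricGen.isAdjGen_corona_copy (hG : G.Connected) {S : Set (V ⊕ V × V')}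
    (hS : IsMetricGen (corona G H) S) (i : V) : IsAdjGen H {x | Sum.inr (i, x) ∈ S} := by
  intro x y hx hy hxy
  obtain ⟨s, hs, hd⟩ := hS (.inr (i, x)) (.inr (i, y)) (by simpa using hxy)
  rcases s with j | ⟨j, z⟩
  · simp [corona_dist_inl hG] at hd
  by_cases hji : j = i
  · subst hji
    have hzx : z ≠ x := fun h => hx (h ▸ hs)
    have hzy : z ≠ y := fun h => hy (h ▸ hs)
    exact ⟨z, hs, (xor_iff_not_iff _ _).2 fun h => hd ((corona_dist_inr_eq_iff j hzx hzy).2 h)⟩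
  · simp [corona_dist_inr_inr_of_fst_ne hG hji] at hd

end Corona

section Counting

variable {V V' : Type*} [Fintype V]

theorem ncard_inr_image_univ_prod (B : Set V') :
    (Sum.inr '' (Set.univ ×ˢ B) : Set (V ⊕ V × V')).ncard = Fintype.card V * B.ncard := by
  rw [Set.ncard_image_of_injective _ Sum.inr_injective, Set.ncard_prod, Set.ncard_univ,
    Nat.card_eq_fintype_card]

theorem sum_ncard_inr_fiber_le [Finite V'] (S : Set (V ⊕ V × V')) :
    ∑ i, {x | Sum.inr (i, x) ∈ S}.ncard ≤ S.ncard := by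
  set T : V → Set (V ⊕ V × V') := fun i => (fun x => .inr (i, x)) '' {x | Sum.inr (i, x) ∈ S}
  have hT : ∀ i, (T i).ncard = {x | Sum.inr (i, x) ∈ S}.ncard := fun i =>
    Set.ncard_image_of_injective _ fun x y h => by simpa using h
  have hdisj : Pairwise fun i j => Disjoint (T i) (T j) := by
    intro i j hij
    rw [Set.disjoint_left]
    rintro _ ⟨x, -, rfl⟩ ⟨y, -, h⟩
    exact hij (Prod.ext_iff.1 (Sum.inr_injective h)).1.symm
  calc ∑ i, {x | Sum.inr (i, x) ∈ S}.ncard = ∑ᶠ i, (T i).ncard := by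
        rw [finsum_eq_sum_of_fintype]
        simp only [hT]
    _ = (⋃ i, T i).ncard := (Set.ncard_iUnion_of_finite (fun _ => Set.toFinite _) hdisj).symm
    _ ≤ S.ncard :=
        Set.ncard_le_ncard (Set.iUnion_subset fun i => by rintro _ ⟨x, hx, rfl⟩; exact hx)

end Counting

theorem statement_2_general {V V' : Type*} [Fintype V] [Fintype V'] [Nontrivial V] [Nontrivial V']
    (𝒢 : Set (SimpleGraph V)) (h𝒢ne : 𝒢.Nonempty) (h𝒢 : ∀ G ∈ 𝒢, G.Connected)
    (ℋ : Set (SimpleGraph V')) :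
    Sd (coronaFam 𝒢 ℋ) = Fintype.card V * SdA ℋ := by
  obtain ⟨B, hB, hBcard⟩ := exists_isSimAdjBasis ℋ
  have hgen : IsSimMetricGen (coronaFam 𝒢 ℋ) (Sum.inr '' (Set.univ ×ˢ B)) := by
    rintro _ ⟨G, hG, H, hH, rfl⟩
    exact isMetricGen_corona (h𝒢 G hG) (hB H hH)
  apply le_antisymm
  · rw [← hBcard, ← ncard_inr_image_univ_prod]
    exact Nat.sInf_le ⟨_, rfl, hgen⟩
  obtain ⟨G, hG⟩ := h𝒢ne
  refine le_csInf ⟨_, _, rfl, hgen⟩ ?_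
  rintro _ ⟨S, rfl, hS⟩
  calc Fintype.card V * SdA ℋ = ∑ _i : V, SdA ℋ := by simp
    _ ≤ ∑ i, {x | Sum.inr (i, x) ∈ S}.ncard := Finset.sum_le_sum fun i _ => Nat.sInf_le
        ⟨_, rfl, fun H hH => (hS _ ⟨G, hG, H, hH, rfl⟩).isAdjGen_corona_copy (h𝒢 G hG) i⟩
    _ ≤ S.ncard := sum_ncard_inr_fiber_le S

theorem statement_2 {V V' : Type*} [Fintype V] [Fintype V'] [Nontrivial V] [Nontrivial V']
    (𝒢 : Set (SimpleGraph V)) (h𝒢ne : 𝒢.Nonempty) (h𝒢 : ∀ G ∈ 𝒢, G.Connected)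
    (ℋ : Set (SimpleGraph V')) (hℋne : ℋ.Nonempty) :
    Sd (coronaFam 𝒢 ℋ) = Fintype.card V * SdA ℋ :=
  statement_2_general 𝒢 h𝒢ne h𝒢 ℋ
end

section
/- Let 𝒢 and ℋ be two families of non-trivial graphs on common vertex sets V₁ and V₂, respectively, with V₁ ∩ V₂ = ∅. Then every simultaneous adjacency basis of the family 𝒢+ℋ is a simultaneous dominating set of 𝒢+ℋ. -/
open SimpleGraph

theorem IsAdjGen.eq_of_forall_adj_iff {V : Type*} {G : SimpleGraph V} {S : Set V}
    (hS : IsAdjGen G S) {x y : V} (hx : x ∉ S) (hy : y ∉ S)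
    (h : ∀ s ∈ S, G.Adj s x ↔ G.Adj s y) : x = y := by
  by_contra hne
  obtain ⟨s, hs, hxor⟩ := hS x y hx hy hne
  exact (xor_iff_not_iff _ _).1 hxor (h s hs)

/- Otherwise `S` consists of non-neighbours of `v`, none of which tells `x` and `y` apart. -/
theorem IsAdjGen.exists_adj_of_adj_of_adj {V : Type*} {G : SimpleGraph V} {S : Set V}
    (hS : IsAdjGen G S) {v x y : V} (hxy : x ≠ y) (hx : G.Adj x v) (hy : G.Adj y v)
    (hcommon : ∀ w, ¬G.Adj w v → G.Adj w x ∧ G.Adj w y) : ∃ s ∈ S, G.Adj s v := by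
  by_contra! hS_nonadj
  refine hxy (hS.eq_of_forall_adj_iff (fun hxS => hS_nonadj x hxS hx)
    (fun hyS => hS_nonadj y hyS hy) fun s hs => ?_)
  obtain ⟨hsx, hsy⟩ := hcommon s (hS_nonadj s hs)
  exact iff_of_true hsx hsy

section Join

variable {V₁ V₂ : Type*} {G : SimpleGraph V₁} {H : SimpleGraph V₂} {S : Set (V₁ ⊕ V₂)}

theorem IsAdjGen.joinG_exists_adj_inl [Nontrivial V₂] (hS : IsAdjGen (joinG G H) S) (a : V₁) :
    ∃ s ∈ S, (joinG G H).Adj s (Sum.inl a) := by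
  obtain ⟨b₁, b₂, hb⟩ := exists_pair_ne V₂
  refine hS.exists_adj_of_adj_of_adj (x := Sum.inr b₁) (y := Sum.inr b₂)
    (Sum.inr_injective.ne hb) trivial trivial ?_
  rintro (c | c) hc
  · exact ⟨trivial, trivial⟩
  · exact absurd trivial hc

theorem IsAdjGen.joinG_exists_adj_inr [Nontrivial V₁] (hS : IsAdjGen (joinG G H) S) (b : V₂) :
    ∃ s ∈ S, (joinG G H).Adj s (Sum.inr b) := by
  obtain ⟨a₁, a₂, ha⟩ := exists_pair_ne V₁
  refine hS.exists_adj_of_adj_of_adj (x := Sum.inl a₁) (y := Sum.inl a₂)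
    (Sum.inl_injective.ne ha) trivial trivial ?_
  rintro (c | c) hc
  · exact absurd trivial hc
  · exact ⟨trivial, trivial⟩

theorem IsAdjGen.isDomSet_joinG [Nontrivial V₁] [Nontrivial V₂] (hS : IsAdjGen (joinG G H) S) :
    IsDomSet (joinG G H) S
  | Sum.inl a, _ => hS.joinG_exists_adj_inl a
  | Sum.inr b, _ => hS.joinG_exists_adj_inr b

end Join

theorem statement_13_general {V₁ V₂ : Type*} [Nontrivial V₁] [Nontrivial V₂]
    (𝒢 : Set (SimpleGraph V₁)) (ℋ : Set (SimpleGraph V₂))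
    (B : Set (V₁ ⊕ V₂)) (hB : IsSimAdjBasis (joinFam 𝒢 ℋ) B) :
    IsSimDomSet (joinFam 𝒢 ℋ) B := by
  rintro _ ⟨G, hG, H, hH, rfl⟩
  exact (hB.1 _ ⟨G, hG, H, hH, rfl⟩).isDomSet_joinG

theorem statement_13 {V₁ V₂ : Type*} [Fintype V₁] [Fintype V₂] [Nontrivial V₁] [Nontrivial V₂]
    (𝒢 : Set (SimpleGraph V₁)) (ℋ : Set (SimpleGraph V₂))
    (B : Set (V₁ ⊕ V₂)) (hB : IsSimAdjBasis (joinFam 𝒢 ℋ) B) :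
    IsSimDomSet (joinFam 𝒢 ℋ) B :=
  statement_13_general 𝒢 ℋ B hB
end

section
/- Let 𝒢 be a family of connected non-trivial graphs on a common vertex set V, and let ℋ and ℋ' be families of non-trivial graphs on disjoint common vertex sets V'₁ and V'₂, respectively. If there exist a simultaneous adjacency basis B of ℋ satisfying B ⊄ N_H(v) for every H ∈ ℋ and every v ∈ V'₁, and a simultaneous adjacency basis B' of ℋ' satisfying B' ⊄ N_{H'}(v') for every H' ∈ ℋ' and every v' ∈ V'₂, then Sd_A(𝒢⊙(ℋ+ℋ')) = |V| · Sd_A(ℋ) + |V| · Sd_A(ℋ'). -/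
open SimpleGraph

/-!
Let `D = B ∪ B'`. Every simultaneous adjacency generator of the joins `H + H'` restricts to
generators of `ℋ` and of `ℋ'`, and `D` separates a vertex `u` of `H` from every vertex of `H'`
by a vertex of `B` outside `N_H(u)`; so `D` is a simultaneous adjacency basis of `ℋ + ℋ'`.
Moreover `D` dominates every join and lies in no neighbourhood. For a basis `D` of a family `ℋ''`
with these two properties, the copies `V × D` generate every corona `G ⊙ H''`, while every
generator of the coronas meets each copy `{i} × V(H'')` in a generator of `ℋ''`; hence
`Sd_A(𝒢 ⊙ ℋ'') = |V| · Sd_A(ℋ'')`.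
-/

open Set

namespace Set

theorem ncard_eq_ncard_preimage_inl_add {α β : Type*} [Finite α] [Finite β] (S : Set (α ⊕ β)) :
    S.ncard = (Sum.inl ⁻¹' S).ncard + (Sum.inr ⁻¹' S).ncard := by
  rw [← ncard_image_of_injective (Sum.inl ⁻¹' S) Sum.inl_injective,
    ← ncard_image_of_injective (Sum.inr ⁻¹' S) Sum.inr_injective,
    ← ncard_union_eq disjoint_image_inl_image_inr]
  congr 1
  ext (a | b) <;> simp

theorem ncard_inl_image_union_inr_image {α β : Type*} [Finite α] [Finite β] (s : Set α)
    (t : Set β) : (Sum.inl '' s ∪ Sum.inr '' t).ncard = s.ncard + t.ncard := by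
  simp [ncard_eq_ncard_preimage_inl_add (Sum.inl '' s ∪ Sum.inr '' t),
    Sum.inl_injective.preimage_image, Sum.inr_injective.preimage_image]

theorem ncard_eq_sum_ncard_fiber {α β : Type*} [Fintype α] [Finite β] (T : Set (α × β)) :
    T.ncard = ∑ a, {b | (a, b) ∈ T}.ncard := by
  simp only [← Nat.card_coe_set_eq]
  rw [Nat.card_congr (Equiv.subtypeProdEquivSigmaSubtype fun a b => (a, b) ∈ T), Nat.card_sigma]
  rfl

end Set

section SimultaneousAdjacencyDimension

variable {W : Type*} {ℋ : Set (SimpleGraph W)}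

theorem isSimAdjGen_univ (ℋ : Set (SimpleGraph W)) : IsSimAdjGen ℋ univ :=
  fun _ _ x _ hx => absurd (mem_univ x) hx

theorem exists_isSimAdjGen_ncard_eq_sdA (ℋ : Set (SimpleGraph W)) :
    ∃ S, S.ncard = SdA ℋ ∧ IsSimAdjGen ℋ S := by
  obtain ⟨S, hS, hgen⟩ : SdA ℋ ∈ {n | ∃ S : Set W, S.ncard = n ∧ IsSimAdjGen ℋ S} :=
    Nat.sInf_mem ⟨_, univ, rfl, isSimAdjGen_univ ℋ⟩
  exact ⟨S, hS, hgen⟩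

theorem sdA_le_ncard {S : Set W} (h : IsSimAdjGen ℋ S) : SdA ℋ ≤ S.ncard :=
  Nat.sInf_le ⟨S, rfl, h⟩

theorem le_sdA {n : ℕ} (h : ∀ S, IsSimAdjGen ℋ S → n ≤ S.ncard) : n ≤ SdA ℋ := by
  obtain ⟨S, hS, hgen⟩ := exists_isSimAdjGen_ncard_eq_sdA ℋ
  exact hS ▸ h S hgen

end SimultaneousAdjacencyDimension

section Corona

variable {V W : Type*} {G : SimpleGraph V} {H : SimpleGraph W}

@[simp] lemma corona_adj_inr_inr_s14 {p q : V × W} :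
    (corona G H).Adj (Sum.inr p) (Sum.inr q) ↔ p.1 = q.1 ∧ H.Adj p.2 q.2 := Iff.rfl

variable {𝒢 : Set (SimpleGraph V)} {ℋ : Set (SimpleGraph W)}

theorem isSimAdjGen_coronaFam [Nonempty W] {B : Set W} (hgen : IsSimAdjGen ℋ B)
    (hdom : IsSimDomSet ℋ B) (hnb : ∀ H ∈ ℋ, ∀ w, ¬ B ⊆ H.neighborSet w) :
    IsSimAdjGen (coronaFam 𝒢 ℋ) (Sum.inr '' (univ ×ˢ B)) := by
  rintro _ ⟨G, -, H, hH, rfl⟩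
  set S : Set (V ⊕ V × W) := Sum.inr '' (univ ×ˢ B) with hS
  obtain ⟨b₀, hb₀, -⟩ := nonempty_of_not_subset (hnb H hH (Classical.arbitrary W))
  have hmem : ∀ i w, Sum.inr (i, w) ∈ S ↔ w ∈ B := by simp [hS]
  have hsep_base_copy : ∀ i j q, ∃ s ∈ S,
      Xor ((corona G H).Adj s (Sum.inl i)) ((corona G H).Adj s (Sum.inr (j, q))) := by
    intro i j q
    obtain ⟨b, hb, hbq⟩ := nonempty_of_not_subset (hnb H hH q)
    exact ⟨_, (hmem i b).2 hb, Or.inl ⟨rfl, fun h => hbq (H.adj_symm h.2)⟩⟩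
  rintro (i | ⟨i, p⟩) (j | ⟨j, q⟩) hx hy hxy
  · exact ⟨_, (hmem i b₀).2 hb₀, Or.inl ⟨rfl, fun h => hxy (congrArg Sum.inl h)⟩⟩
  · exact hsep_base_copy i j q
  · obtain ⟨s, hs, hxor⟩ := hsep_base_copy j i p
    exact ⟨s, hs, hxor.symm⟩
  · by_cases hij : i = j
    · subst hij
      have hp : p ∉ B := fun h => hx ((hmem i p).2 h)
      have hq : q ∉ B := fun h => hy ((hmem i q).2 h)
      obtain ⟨b, hb, hxor⟩ := hgen H hH p q hp hq (fun h => hxy (by rw [h]))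
      exact ⟨_, (hmem i b).2 hb, by simpa using hxor⟩
    · obtain ⟨b, hb, hbp⟩ := hdom H hH p fun h => hx ((hmem i p).2 h)
      exact ⟨_, (hmem i b).2 hb, Or.inl ⟨⟨rfl, hbp⟩, fun h => hij h.1⟩⟩

theorem IsSimAdjGen.fiber_of_coronaFam (h𝒢 : 𝒢.Nonempty) {S : Set (V ⊕ V × W)}
    (h : IsSimAdjGen (coronaFam 𝒢 ℋ) S) (i : V) : IsSimAdjGen ℋ {w | Sum.inr (i, w) ∈ S} := by
  obtain ⟨G, hG⟩ := h𝒢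
  intro H hH x y hx hy hxy
  obtain ⟨s, hs, hxor⟩ := h _ ⟨G, hG, H, hH, rfl⟩ _ _ hx hy (by simpa using hxy)
  rcases s with j | ⟨j, b⟩
  · rcases hxor with ⟨h, hn⟩ | ⟨h, hn⟩ <;> exact (hn h).elim
  · obtain rfl : j = i := by rcases hxor with ⟨h, -⟩ | ⟨h, -⟩ <;> exact h.1
    exact ⟨b, hs, by simpa using hxor⟩

theorem card_mul_sdA_le_sdA_coronaFam [Fintype V] [Finite W] (h𝒢 : 𝒢.Nonempty) :
    Fintype.card V * SdA ℋ ≤ SdA (coronaFam 𝒢 ℋ) := by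
  refine le_sdA fun S hS => ?_
  calc Fintype.card V * SdA ℋ = ∑ _i : V, SdA ℋ := by simp
    _ ≤ ∑ i, {w | Sum.inr (i, w) ∈ S}.ncard :=
      Finset.sum_le_sum fun i _ => sdA_le_ncard (hS.fiber_of_coronaFam h𝒢 i)
    _ = (Sum.inr ⁻¹' S).ncard := (ncard_eq_sum_ncard_fiber (Sum.inr ⁻¹' S)).symm
    _ ≤ S.ncard := by rw [ncard_eq_ncard_preimage_inl_add S]; omega

theorem sdA_coronaFam_eq [Fintype V] [Finite W] [Nonempty W] (h𝒢 : 𝒢.Nonempty) {B : Set W}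
    (hB : IsSimAdjBasis ℋ B) (hdom : IsSimDomSet ℋ B)
    (hnb : ∀ H ∈ ℋ, ∀ w, ¬ B ⊆ H.neighborSet w) :
    SdA (coronaFam 𝒢 ℋ) = Fintype.card V * SdA ℋ := by
  refine le_antisymm ?_ (card_mul_sdA_le_sdA_coronaFam h𝒢)
  calc SdA (coronaFam 𝒢 ℋ) ≤ (Sum.inr '' (univ ×ˢ B)).ncard :=
        sdA_le_ncard (isSimAdjGen_coronaFam hB.1 hdom hnb)
    _ = Fintype.card V * SdA ℋ := by
      rw [ncard_image_of_injective _ Sum.inr_injective, ncard_prod, ncard_univ,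
        Nat.card_eq_fintype_card, hB.2]

end Corona

section Join

variable {V₁ V₂ : Type*} {H : SimpleGraph V₁} {H' : SimpleGraph V₂}

@[simp] lemma joinG_adj_inl_inl {a b : V₁} :
    (joinG H H').Adj (Sum.inl a) (Sum.inl b) ↔ H.Adj a b := Iff.rfl

@[simp] lemma joinG_adj_inr_inr {a b : V₂} :
    (joinG H H').Adj (Sum.inr a) (Sum.inr b) ↔ H'.Adj a b := Iff.rfl

variable {ℋ : Set (SimpleGraph V₁)} {ℋ' : Set (SimpleGraph V₂)} {B : Set V₁} {B' : Set V₂}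

theorem isSimAdjGen_joinFam (hgen : IsSimAdjGen ℋ B) (hgen' : IsSimAdjGen ℋ' B')
    (hnb : ∀ H ∈ ℋ, ∀ v, ¬ B ⊆ H.neighborSet v) :
    IsSimAdjGen (joinFam ℋ ℋ') (Sum.inl '' B ∪ Sum.inr '' B') := by
  rintro _ ⟨H, hH, H', hH', rfl⟩ (u | w) (u' | w') hx hy hxy
  · obtain ⟨b, hb, hxor⟩ := hgen H hH u u' (by simpa using hx) (by simpa using hy)
      (by simpa using hxy)
    exact ⟨Sum.inl b, by simpa using hb, by simpa using hxor⟩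
  · obtain ⟨b, hb, hbu⟩ := nonempty_of_not_subset (hnb H hH u)
    exact ⟨Sum.inl b, by simpa using hb, Or.inr ⟨trivial, fun h => hbu (H.adj_symm h)⟩⟩
  · obtain ⟨b, hb, hbu⟩ := nonempty_of_not_subset (hnb H hH u')
    exact ⟨Sum.inl b, by simpa using hb, Or.inl ⟨trivial, fun h => hbu (H.adj_symm h)⟩⟩
  · obtain ⟨b, hb, hxor⟩ := hgen' H' hH' w w' (by simpa using hx) (by simpa using hy)
      (by simpa using hxy)
    exact ⟨Sum.inr b, by simpa using hb, by simpa using hxor⟩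

theorem IsSimAdjGen.preimage_inl_of_joinFam (hℋ' : ℋ'.Nonempty) {S : Set (V₁ ⊕ V₂)}
    (h : IsSimAdjGen (joinFam ℋ ℋ') S) : IsSimAdjGen ℋ (Sum.inl ⁻¹' S) := by
  obtain ⟨H', hH'⟩ := hℋ'
  intro H hH x y hx hy hxy
  obtain ⟨s | s, hs, hxor⟩ := h _ ⟨H, hH, H', hH', rfl⟩ _ _ hx hy (by simpa using hxy)
  · exact ⟨s, hs, hxor⟩
  · rcases hxor with ⟨h, hn⟩ | ⟨h, hn⟩ <;> exact (hn h).elim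

theorem IsSimAdjGen.preimage_inr_of_joinFam (hℋ : ℋ.Nonempty) {S : Set (V₁ ⊕ V₂)}
    (h : IsSimAdjGen (joinFam ℋ ℋ') S) : IsSimAdjGen ℋ' (Sum.inr ⁻¹' S) := by
  obtain ⟨H, hH⟩ := hℋ
  intro H' hH' x y hx hy hxy
  obtain ⟨s | s, hs, hxor⟩ := h _ ⟨H, hH, H', hH', rfl⟩ _ _ hx hy (by simpa using hxy)
  · rcases hxor with ⟨h, hn⟩ | ⟨h, hn⟩ <;> exact (hn h).elim
  · exact ⟨s, hs, hxor⟩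

theorem sdA_joinFam_eq [Finite V₁] [Finite V₂] (hℋ : ℋ.Nonempty) (hℋ' : ℋ'.Nonempty)
    (hB : IsSimAdjBasis ℋ B) (hB' : IsSimAdjBasis ℋ' B')
    (hnb : ∀ H ∈ ℋ, ∀ v, ¬ B ⊆ H.neighborSet v) :
    SdA (joinFam ℋ ℋ') = SdA ℋ + SdA ℋ' := by
  refine le_antisymm ?_ (le_sdA fun S hS => ?_)
  · calc SdA (joinFam ℋ ℋ') ≤ (Sum.inl '' B ∪ Sum.inr '' B').ncard :=
          sdA_le_ncard (isSimAdjGen_joinFam hB.1 hB'.1 hnb)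
      _ = SdA ℋ + SdA ℋ' := by rw [ncard_inl_image_union_inr_image, hB.2, hB'.2]
  · rw [ncard_eq_ncard_preimage_inl_add S]
    exact add_le_add (sdA_le_ncard (hS.preimage_inl_of_joinFam hℋ'))
      (sdA_le_ncard (hS.preimage_inr_of_joinFam hℋ))

theorem isSimAdjBasis_joinFam [Finite V₁] [Finite V₂] (hℋ : ℋ.Nonempty) (hℋ' : ℋ'.Nonempty)
    (hB : IsSimAdjBasis ℋ B) (hB' : IsSimAdjBasis ℋ' B')
    (hnb : ∀ H ∈ ℋ, ∀ v, ¬ B ⊆ H.neighborSet v) :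
    IsSimAdjBasis (joinFam ℋ ℋ') (Sum.inl '' B ∪ Sum.inr '' B') :=
  ⟨isSimAdjGen_joinFam hB.1 hB'.1 hnb, by
    rw [ncard_inl_image_union_inr_image, hB.2, hB'.2, sdA_joinFam_eq hℋ hℋ' hB hB' hnb]⟩

theorem isSimDomSet_joinFam (hB : B.Nonempty) (hB' : B'.Nonempty) :
    IsSimDomSet (joinFam ℋ ℋ') (Sum.inl '' B ∪ Sum.inr '' B') := by
  rintro _ ⟨H, -, H', -, rfl⟩ (u | w) -
  · exact ⟨Sum.inr hB'.some, by simpa using hB'.some_mem, trivial⟩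
  · exact ⟨Sum.inl hB.some, by simpa using hB.some_mem, trivial⟩

theorem not_subset_neighborSet_joinFam (hnb : ∀ H ∈ ℋ, ∀ v, ¬ B ⊆ H.neighborSet v)
    (hnb' : ∀ H' ∈ ℋ', ∀ v', ¬ B' ⊆ H'.neighborSet v') :
    ∀ K ∈ joinFam ℋ ℋ', ∀ x, ¬ Sum.inl '' B ∪ Sum.inr '' B' ⊆ K.neighborSet x := by
  rintro _ ⟨H, hH, H', hH', rfl⟩ (u | w) hsub
  · obtain ⟨b, hb, hbu⟩ := nonempty_of_not_subset (hnb H hH u)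
    exact hbu (hsub (mem_union_left _ (mem_image_of_mem _ hb)))
  · obtain ⟨b, hb, hbw⟩ := nonempty_of_not_subset (hnb' H' hH' w)
    exact hbw (hsub (mem_union_right _ (mem_image_of_mem _ hb)))

end Join

theorem statement_14_general {V V₁ V₂ : Type*} [Fintype V]
    [Fintype V₁] [Nontrivial V₁] [Fintype V₂] [Nontrivial V₂]
    (𝒢 : Set (SimpleGraph V)) (h𝒢ne : 𝒢.Nonempty)
    (ℋ : Set (SimpleGraph V₁)) (hℋne : ℋ.Nonempty)
    (ℋ' : Set (SimpleGraph V₂)) (hℋ'ne : ℋ'.Nonempty)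
    (hB : ∃ B : Set V₁, IsSimAdjBasis ℋ B ∧ ∀ H ∈ ℋ, ∀ v : V₁, ¬ B ⊆ H.neighborSet v)
    (hB' : ∃ B' : Set V₂, IsSimAdjBasis ℋ' B' ∧ ∀ H' ∈ ℋ', ∀ v' : V₂, ¬ B' ⊆ H'.neighborSet v') :
    SdA (coronaFam 𝒢 (joinFam ℋ ℋ')) =
      Fintype.card V * SdA ℋ + Fintype.card V * SdA ℋ' := by
  obtain ⟨B, hB, hnb⟩ := hB
  obtain ⟨B', hB', hnb'⟩ := hB'
  obtain ⟨H, hH⟩ := hℋne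
  obtain ⟨H', hH'⟩ := hℋ'ne
  have hBne : B.Nonempty :=
    (nonempty_of_not_subset (hnb H hH (Classical.arbitrary V₁))).mono sdiff_subset
  have hB'ne : B'.Nonempty :=
    (nonempty_of_not_subset (hnb' H' hH' (Classical.arbitrary V₂))).mono sdiff_subset
  rw [sdA_coronaFam_eq h𝒢ne (isSimAdjBasis_joinFam ⟨H, hH⟩ ⟨H', hH'⟩ hB hB' hnb)
      (isSimDomSet_joinFam hBne hB'ne) (not_subset_neighborSet_joinFam hnb hnb'),
    sdA_joinFam_eq ⟨H, hH⟩ ⟨H', hH'⟩ hB hB' hnb, mul_add]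

theorem statement_14 {V V₁ V₂ : Type*} [Fintype V] [Nontrivial V]
    [Fintype V₁] [Nontrivial V₁] [Fintype V₂] [Nontrivial V₂]
    (𝒢 : Set (SimpleGraph V)) (h𝒢ne : 𝒢.Nonempty) (h𝒢 : ∀ G ∈ 𝒢, G.Connected)
    (ℋ : Set (SimpleGraph V₁)) (hℋne : ℋ.Nonempty)
    (ℋ' : Set (SimpleGraph V₂)) (hℋ'ne : ℋ'.Nonempty)
    (hB : ∃ B : Set V₁, IsSimAdjBasis ℋ B ∧ ∀ H ∈ ℋ, ∀ v : V₁, ¬ B ⊆ H.neighborSet v)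
    (hB' : ∃ B' : Set V₂, IsSimAdjBasis ℋ' B' ∧ ∀ H' ∈ ℋ', ∀ v' : V₂, ¬ B' ⊆ H'.neighborSet v') :
    SdA (coronaFam 𝒢 (joinFam ℋ ℋ')) =
      Fintype.card V * SdA ℋ + Fintype.card V * SdA ℋ' :=
  statement_14_general 𝒢 h𝒢ne ℋ hℋne ℋ' hℋ'ne hB hB'
end
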